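/- Let B be a nonempty family of subsets of a finite set E and let μ0 be a Rayleigh probability measure on B with full support, i.e., for every weight vector w ∈ (0,∞)^E the tilted measure μ_w(A) ∝ μ0(A)·∏_{e∈A} w_e satisfies P_{B∼μ_w}[T ⊆ B]·P_{B∼μ_w}[e ∈ B] ≥ P_{B∼μ_w}[T ∪ {e} ⊆ B] for all e ∈ E and T ⊆ E∖{e}. Then for every q in the convex hull of the indicator vectors {1_A : A ∈ B}, there exists a Rayleigh probability measure μ on B (obtainable as a limit of tilted measures μ_{w^(t)}) whose marginals satisfy P_{B∼μ}[e ∈ B] = q_e for every e ∈ E. -/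

import Mathlib

open Finset

/-- Probability of the event `P` under the tilt of the measure `μ` by the weight vector `w`:
`μ_w(A) ∝ μ(A) · ∏_{e∈A} w_e`. -/
noncomputable def tiltProb {E : Type*} [Fintype E] [DecidableEq E]
    (μ : Finset E → ℝ) (w : E → ℝ) (P : Finset E → Prop) [DecidablePred P] : ℝ :=
  (∑ A ∈ univ.filter P, μ A * ∏ e ∈ A, w e) / (∑ A : Finset E, μ A * ∏ e ∈ A, w e)

/-- `μ` is Rayleigh: every positive tilt of `μ` satisfies the Rayleigh inequality
`P[T ⊆ B] · P[e ∈ B] ≥ P[T ∪ {e} ⊆ B]`. -/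
def IsRayleigh {E : Type*} [Fintype E] [DecidableEq E] (μ : Finset E → ℝ) : Prop :=
  ∀ w : E → ℝ, (∀ e, 0 < w e) → ∀ e : E, ∀ T : Finset E, e ∉ T →
    tiltProb μ w (fun A => insert e T ⊆ A) ≤
      tiltProb μ w (fun A => T ⊆ A) * tiltProb μ w (fun A => e ∈ A)

/-!
Maximum entropy. The marginals of the exponential tilt `μ0 A · exp (∑_{e∈A} s e) / Z(s)` form the
gradient of `log Z`, so a minimiser of `log Z(s) - ⟨q, s⟩ + ε ‖s‖²` is a tilt whose marginals are
`q - 2 ε s`. Since `q` is an average of indicator vectors of sets charged by `μ0`, Jensen gives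
`log Z(s) ≥ log m + ⟨q, s⟩`, which bounds `ε ‖s‖²` uniformly; hence the marginals are within
`O(√ε)` of `q`. A limit point of these tilts as `ε → 0` has marginals `q`, and it is Rayleigh
because tilts of tilts of `μ0` are tilts of `μ0` and the Rayleigh inequalities are closed.
-/

open Filter Topology

lemma tendsto_mul_of_mul_sq_le {ι : Type*} {l : Filter ι} {ε x : ι → ℝ} {C : ℝ}
    (hε : Tendsto ε l (𝓝 0)) (hε0 : ∀ i, 0 ≤ ε i) (hC : ∀ i, ε i * x i ^ 2 ≤ C) :
    Tendsto (fun i => ε i * x i) l (𝓝 0) := by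
  refine squeeze_zero_norm (a := fun i => Real.sqrt (C * ε i)) (fun i => ?_) ?_
  · rw [Real.norm_eq_abs]
    refine Real.abs_le_sqrt ?_
    calc (ε i * x i) ^ 2 = ε i * (ε i * x i ^ 2) := by ring
      _ ≤ ε i * C := mul_le_mul_of_nonneg_left (hC i) (hε0 i)
      _ = C * ε i := mul_comm _ _
  · simpa using (hε.const_mul C).sqrt

lemma exists_pos_forall_mul_le {ι : Type*} [Finite ι] {f g : ι → ℝ} (hf : ∀ i, 0 ≤ f i)
    (hfg : ∀ i, 0 < g i → 0 < f i) : ∃ m > 0, ∀ i, m * g i ≤ f i := by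
  have hsmall : ∀ i, ∀ᶠ m in 𝓝[>] (0 : ℝ), m * g i ≤ f i := by
    intro i
    rcases (hf i).eq_or_lt with hfi | hfi
    · have hgi : g i ≤ 0 := not_lt.1 fun hgi => (hfg i hgi).ne hfi
      filter_upwards [self_mem_nhdsWithin] with m hm
      exact hfi ▸ mul_nonpos_of_nonneg_of_nonpos (le_of_lt hm) hgi
    · have hlim : Tendsto (fun m => m * g i) (𝓝[>] (0 : ℝ)) (𝓝 0) :=
        ((continuous_mul_const (g i)).tendsto' 0 0 (zero_mul _)).mono_left nhdsWithin_le_nhds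
      exact (hlim.eventually (gt_mem_nhds hfi)).mono fun _ => le_of_lt
  obtain ⟨m, hm, hpos⟩ := ((eventually_all.2 hsmall).and self_mem_nhdsWithin).exists
  exact ⟨m, hpos, hm⟩

section Tilt

variable {E : Type*} [Fintype E]

noncomputable def partitionFn (μ0 : Finset E → ℝ) (s : E → ℝ) : ℝ :=
  ∑ A, μ0 A * Real.exp (∑ e ∈ A, s e)

/-- The tilt of `μ0` by the weights `w = exp ∘ s`, normalised. -/
noncomputable def expTilt (μ0 : Finset E → ℝ) (s : E → ℝ) (A : Finset E) : ℝ :=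
  μ0 A * Real.exp (∑ e ∈ A, s e) / partitionFn μ0 s

def marginal [DecidableEq E] (μ : Finset E → ℝ) (e : E) : ℝ :=
  ∑ A ∈ univ.filter (fun A => e ∈ A), μ A

/-- The dual of the maximum-entropy problem with marginals `q`, made coercive by the penalty
`ε ‖s‖₂²`. -/
noncomputable def penalizedDual (μ0 : Finset E → ℝ) (q : E → ℝ) (ε : ℝ) (s : E → ℝ) : ℝ :=
  Real.log (partitionFn μ0 s) - ∑ e, q e * s e + ε * ∑ e, s e ^ 2

lemma continuous_partitionFn (μ0 : Finset E → ℝ) : Continuous (partitionFn μ0) := by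
  unfold partitionFn
  fun_prop

lemma continuous_marginal [DecidableEq E] (e : E) :
    Continuous fun μ : Finset E → ℝ => marginal μ e :=
  continuous_finsetSum _ fun A _ => continuous_apply A

lemma expTilt_mem_stdSimplex {μ0 : Finset E → ℝ} (h0 : ∀ A, 0 ≤ μ0 A) {s : E → ℝ}
    (hZ : 0 < partitionFn μ0 s) : expTilt μ0 s ∈ stdSimplex ℝ (Finset E) :=
  ⟨fun A => div_nonneg (mul_nonneg (h0 A) (Real.exp_pos _).le) hZ.le, by
    simp only [expTilt, ← sum_div]
    exact div_self hZ.ne'⟩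

lemma tiltProb_expTilt [DecidableEq E] (μ0 : Finset E → ℝ) {s : E → ℝ}
    (hZ : partitionFn μ0 s ≠ 0) (w : E → ℝ) (P : Finset E → Prop) [DecidablePred P] :
    tiltProb (expTilt μ0 s) w P = tiltProb μ0 (fun e => Real.exp (s e) * w e) P := by
  have hterm : ∀ A : Finset E, expTilt μ0 s A * ∏ e ∈ A, w e
      = (μ0 A * ∏ e ∈ A, Real.exp (s e) * w e) / partitionFn μ0 s := by
    intro A
    rw [expTilt, prod_mul_distrib, ← Real.exp_sum]
    ring
  simp only [tiltProb, hterm, ← sum_div, div_div_div_cancel_right₀ hZ]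

lemma isRayleigh_expTilt [DecidableEq E] {μ0 : Finset E → ℝ} (h : IsRayleigh μ0) {s : E → ℝ}
    (hZ : partitionFn μ0 s ≠ 0) : IsRayleigh (expTilt μ0 s) := by
  intro w hw e T heT
  simp only [tiltProb_expTilt μ0 hZ]
  exact h _ (fun e => mul_pos (Real.exp_pos _) (hw e)) e T heT

lemma continuousAt_tiltProb [DecidableEq E] {μ : Finset E → ℝ} {w : E → ℝ}
    (hden : ∑ A, μ A * ∏ e ∈ A, w e ≠ 0) (P : Finset E → Prop) [DecidablePred P] :
    ContinuousAt (fun ν => tiltProb ν w P) μ := by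
  unfold tiltProb
  fun_prop (disch := exact hden)

lemma isRayleigh_of_tendsto [DecidableEq E] {ι : Type*} {l : Filter ι} [l.NeBot]
    {ν : ι → Finset E → ℝ} {μ : Finset E → ℝ} (hν : ∀ i, IsRayleigh (ν i))
    (hlim : Tendsto ν l (𝓝 μ)) (hμ : μ ∈ stdSimplex ℝ (Finset E)) : IsRayleigh μ := by
  intro w hw e T heT
  obtain ⟨A, -, hA⟩ := exists_ne_zero_of_sum_ne_zero (hμ.2.symm ▸ one_ne_zero : ∑ A, μ A ≠ 0)
  have hden : 0 < ∑ A, μ A * ∏ e ∈ A, w e :=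
    sum_pos' (fun A _ => mul_nonneg (hμ.1 A) (prod_nonneg fun e _ => (hw e).le))
      ⟨A, mem_univ A, mul_pos ((hμ.1 A).lt_of_ne' hA) (prod_pos fun e _ => hw e)⟩
  have htend := fun (P : Finset E → Prop) [DecidablePred P] =>
    (continuousAt_tiltProb hden.ne' P).tendsto.comp hlim
  exact le_of_tendsto_of_tendsto' (htend _) ((htend _).mul (htend _))
    fun i => hν i w hw e T heT

lemma sum_mul_sum_eq_sum_marginal_mul [DecidableEq E] (c : Finset E → ℝ) (s : E → ℝ) :
    ∑ A, c A * ∑ e ∈ A, s e = ∑ e, marginal c e * s e := by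
  simp only [mul_sum, marginal, sum_mul]
  exact sum_comm' (by simp)

/-- Jensen's inequality for `exp`, averaged over the probability vector `c`. -/
lemma mul_exp_le_partitionFn [DecidableEq E] {μ0 c : Finset E → ℝ} {m : ℝ} (hm : 0 ≤ m)
    (hc0 : ∀ A, 0 ≤ c A) (hc1 : ∑ A, c A = 1) (hmc : ∀ A, m * c A ≤ μ0 A) (s : E → ℝ) :
    m * Real.exp (∑ e, marginal c e * s e) ≤ partitionFn μ0 s := by
  rw [← sum_mul_sum_eq_sum_marginal_mul]
  calc m * Real.exp (∑ A, c A * ∑ e ∈ A, s e)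
      ≤ m * ∑ A, c A * Real.exp (∑ e ∈ A, s e) := by
        gcongr
        simpa only [smul_eq_mul] using
          convexOn_exp.map_sum_le (fun A _ => hc0 A) hc1 (fun A _ => Set.mem_univ _)
    _ ≤ partitionFn μ0 s := by
        rw [mul_sum]
        refine sum_le_sum fun A _ => ?_
        rw [← mul_assoc]
        exact mul_le_mul_of_nonneg_right (hmc A) (Real.exp_pos _).le

lemma partitionFn_pos {μ0 : Finset E → ℝ} {q : E → ℝ} {m : ℝ} (hm : 0 < m)
    (hlow : ∀ s, m * Real.exp (∑ e, q e * s e) ≤ partitionFn μ0 s) (s : E → ℝ) :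
    0 < partitionFn μ0 s :=
  (mul_pos hm (Real.exp_pos _)).trans_le (hlow s)

lemma log_add_le_penalizedDual {μ0 : Finset E → ℝ} {q : E → ℝ} {m : ℝ} (hm : 0 < m)
    (hlow : ∀ s, m * Real.exp (∑ e, q e * s e) ≤ partitionFn μ0 s) (ε : ℝ) (s : E → ℝ) :
    Real.log m + ε * ∑ e, s e ^ 2 ≤ penalizedDual μ0 q ε s := by
  have h := Real.log_le_log (mul_pos hm (Real.exp_pos _)) (hlow s)
  rw [Real.log_mul hm.ne' (Real.exp_pos _).ne', Real.log_exp] at h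
  unfold penalizedDual
  linarith

lemma sq_norm_le_sum_sq (y : E → ℝ) : ‖y‖ ^ 2 ≤ ∑ e, y e ^ 2 := by
  have hsum : 0 ≤ ∑ e, y e ^ 2 := sum_nonneg fun e _ => sq_nonneg (y e)
  rw [← Real.le_sqrt (norm_nonneg y) hsum, pi_norm_le_iff_of_nonneg (Real.sqrt_nonneg _)]
  exact fun e => Real.abs_le_sqrt (single_le_sum (fun e _ => sq_nonneg (y e)) (mem_univ e))

lemma exists_forall_penalizedDual_le {μ0 : Finset E → ℝ} {q : E → ℝ} {m : ℝ} (hm : 0 < m)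
    (hlow : ∀ s, m * Real.exp (∑ e, q e * s e) ≤ partitionFn μ0 s) {ε : ℝ} (hε : 0 < ε) :
    ∃ s, ∀ y, penalizedDual μ0 q ε s ≤ penalizedDual μ0 q ε y := by
  have hcont : Continuous (penalizedDual μ0 q ε) :=
    (((continuous_partitionFn μ0).log fun s => (partitionFn_pos hm hlow s).ne').sub
      (by fun_prop)).add (by fun_prop)
  refine hcont.exists_forall_le (tendsto_atTop_mono (fun y => ?_)
    (tendsto_atTop_add_const_left _ (Real.log m)
      (((tendsto_pow_atTop two_ne_zero).const_mul_atTop hε).comp tendsto_norm_cocompact_atTop)))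
  have hnorm := mul_le_mul_of_nonneg_left (sq_norm_le_sum_sq y) hε.le
  have hdual := log_add_le_penalizedDual hm hlow ε y
  dsimp only [Function.comp]
  linarith

lemma hasDerivAt_penalizedDual_line [DecidableEq E] (μ0 : Finset E → ℝ) (q : E → ℝ) (ε : ℝ)
    {s : E → ℝ} (hZ : 0 < partitionFn μ0 s) (v : E → ℝ) :
    HasDerivAt (fun t : ℝ => penalizedDual μ0 q ε (s + t • v))
      (∑ e, (marginal (expTilt μ0 s) e - q e + 2 * ε * s e) * v e) 0 := by
  have hline : ∀ A : Finset E,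
      HasDerivAt (fun t : ℝ => ∑ e ∈ A, (s + t • v) e) (∑ e ∈ A, v e) 0 := fun A => by
    simpa using HasDerivAt.fun_sum fun e _ =>
      ((hasDerivAt_id (0 : ℝ)).mul_const (v e)).const_add (s e)
  have hZ' : HasDerivAt (fun t : ℝ => partitionFn μ0 (s + t • v))
      (∑ A, μ0 A * (Real.exp (∑ e ∈ A, s e) * ∑ e ∈ A, v e)) 0 := by
    unfold partitionFn
    simpa using HasDerivAt.fun_sum fun A _ => ((hline A).exp).const_mul (μ0 A)
  have hlin : HasDerivAt (fun t : ℝ => ∑ e, q e * (s + t • v) e) (∑ e, q e * v e) 0 := by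
    simpa using HasDerivAt.fun_sum fun e _ =>
      (((hasDerivAt_id (0 : ℝ)).mul_const (v e)).const_add (s e)).const_mul (q e)
  have hsq : HasDerivAt (fun t : ℝ => ∑ e, (s + t • v) e ^ 2) (∑ e, 2 * s e * v e) 0 := by
    simpa using HasDerivAt.fun_sum fun e _ =>
      (((hasDerivAt_id (0 : ℝ)).mul_const (v e)).const_add (s e)).pow 2
  refine (((hZ'.log (by simpa using hZ.ne')).sub hlin).add (hsq.const_mul ε)).congr_deriv ?_
  have hmarg : (∑ A, μ0 A * (Real.exp (∑ e ∈ A, s e) * ∑ e ∈ A, v e)) / partitionFn μ0 s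
      = ∑ e, marginal (expTilt μ0 s) e * v e := by
    rw [← sum_mul_sum_eq_sum_marginal_mul, sum_div]
    exact sum_congr rfl fun A _ => by rw [expTilt]; ring
  rw [zero_smul, add_zero, hmarg, mul_sum, ← sum_sub_distrib, ← sum_add_distrib]
  exact sum_congr rfl fun e _ => by ring

lemma marginal_expTilt_eq_of_forall_le [DecidableEq E] {μ0 : Finset E → ℝ} {q : E → ℝ} {ε : ℝ}
    {s : E → ℝ} (hZ : 0 < partitionFn μ0 s)
    (hmin : ∀ y, penalizedDual μ0 q ε s ≤ penalizedDual μ0 q ε y) (e : E) :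
    marginal (expTilt μ0 s) e = q e - 2 * ε * s e := by
  have hlocal : IsLocalMin (fun t : ℝ => penalizedDual μ0 q ε (s + t • Pi.single e 1)) 0 :=
    Eventually.of_forall fun t => by simpa using hmin _
  have hcrit := hlocal.hasDerivAt_eq_zero (hasDerivAt_penalizedDual_line μ0 q ε hZ _)
  simp only [Pi.single_apply, mul_ite, mul_one, mul_zero, sum_ite_eq', mem_univ, if_true] at hcrit
  linarith

lemma exists_expTilt_marginal_eq_sub [DecidableEq E] {μ0 : Finset E → ℝ} {q : E → ℝ} {m : ℝ}
    (hm : 0 < m) (hlow : ∀ s, m * Real.exp (∑ e, q e * s e) ≤ partitionFn μ0 s) {ε : ℝ}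
    (hε : 0 < ε) :
    ∃ s : E → ℝ, ε * ∑ e, s e ^ 2 ≤ Real.log (partitionFn μ0 0) - Real.log m ∧
      ∀ e, marginal (expTilt μ0 s) e = q e - 2 * ε * s e := by
  obtain ⟨s, hs⟩ := exists_forall_penalizedDual_le hm hlow hε
  refine ⟨s, ?_, marginal_expTilt_eq_of_forall_le (partitionFn_pos hm hlow s) hs⟩
  have hat0 : penalizedDual μ0 q ε 0 = Real.log (partitionFn μ0 0) := by simp [penalizedDual]
  linarith [hs 0, log_add_le_penalizedDual hm hlow ε s]

lemma exists_tendsto_marginal_expTilt [DecidableEq E] {μ0 : Finset E → ℝ} {q : E → ℝ} {m : ℝ}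
    (hm : 0 < m) (hlow : ∀ s, m * Real.exp (∑ e, q e * s e) ≤ partitionFn μ0 s) :
    ∃ s : ℕ → E → ℝ, ∀ e, Tendsto (fun n => marginal (expTilt μ0 (s n)) e) atTop (𝓝 (q e)) := by
  have hε : ∀ n : ℕ, 0 < 1 / ((n : ℝ) + 1) := fun n => by positivity
  choose s hs hmarg using fun n => exists_expTilt_marginal_eq_sub hm hlow (hε n)
  refine ⟨s, fun e => ?_⟩
  have hsmall : Tendsto (fun n : ℕ => 1 / ((n : ℝ) + 1) * s n e) atTop (𝓝 0) :=
    tendsto_mul_of_mul_sq_le tendsto_one_div_add_atTop_nhds_zero_nat (fun n => (hε n).le)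
      fun n => (mul_le_mul_of_nonneg_left (single_le_sum (fun e _ => sq_nonneg (s n e))
        (mem_univ e)) (hε n).le).trans (hs n)
  simp only [hmarg]
  simpa [mul_assoc] using (hsmall.const_mul 2).const_sub (q e)

end Tilt

theorem stmt_12_general {E : Type*} [Fintype E] [DecidableEq E]
    (B : Finset (Finset E))
    -- μ0 is a full-support Rayleigh probability measure on B
    (μ0 : Finset E → ℝ)
    (h0 : ∀ A, 0 ≤ μ0 A)
    (hsupp : ∀ A : Finset E, μ0 A ≠ 0 ↔ A ∈ B)
    (hray : IsRayleigh μ0)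
    -- q is in the convex hull of the indicator vectors {1_A : A ∈ B}
    (q : E → ℝ)
    (hq : ∃ c : Finset E → ℝ,
      (∀ A, 0 ≤ c A) ∧ (∀ A, c A ≠ 0 → A ∈ B) ∧ (∑ A : Finset E, c A) = 1 ∧
      (∀ e, q e = ∑ A ∈ univ.filter (fun A => e ∈ A), c A)) :
    -- there is a Rayleigh probability measure on B with marginals q
    ∃ μ : Finset E → ℝ,
      (∀ A, 0 ≤ μ A) ∧
      (∀ A, μ A ≠ 0 → A ∈ B) ∧
      (∑ A : Finset E, μ A) = 1 ∧
      IsRayleigh μ ∧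
      (∀ e, ∑ A ∈ univ.filter (fun A => e ∈ A), μ A = q e) := by
  obtain ⟨c, hc0, hcB, hc1, hcq⟩ := hq
  obtain rfl : q = marginal c := funext hcq
  obtain ⟨m, hm, hmc⟩ := exists_pos_forall_mul_le h0 fun A hA =>
    (h0 A).lt_of_ne' ((hsupp A).2 (hcB A hA.ne'))
  have hlow := mul_exp_le_partitionFn hm.le hc0 hc1 hmc
  have hZ := partitionFn_pos hm hlow
  obtain ⟨s, hs⟩ := exists_tendsto_marginal_expTilt hm hlow
  obtain ⟨μ, hμ, φ, hφ, hlim⟩ := (isCompact_stdSimplex ℝ (Finset E)).tendsto_subseq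
    fun n => expTilt_mem_stdSimplex h0 (hZ (s n))
  refine ⟨μ, hμ.1, fun A hA => ?_, hμ.2,
    isRayleigh_of_tendsto (fun n => isRayleigh_expTilt hray (hZ _).ne') hlim hμ, fun e => ?_⟩
  · by_contra hAB
    have hA0 : μ0 A = 0 := not_not.1 (mt (hsupp A).1 hAB)
    exact hA (tendsto_nhds_unique (tendsto_pi_nhds.1 hlim A) (by simp [expTilt, hA0]))
  · exact tendsto_nhds_unique ((continuous_marginal e).tendsto μ |>.comp hlim)
      ((hs e).comp hφ.tendsto_atTop)

theorem stmt_12 {E : Type*} [Fintype E] [DecidableEq E]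
    (B : Finset (Finset E)) (hB : B.Nonempty)
    -- μ0 is a full-support Rayleigh probability measure on B
    (μ0 : Finset E → ℝ)
    (h0 : ∀ A, 0 ≤ μ0 A)
    (hsupp : ∀ A : Finset E, μ0 A ≠ 0 ↔ A ∈ B)
    (hsum : (∑ A : Finset E, μ0 A) = 1)
    (hray : IsRayleigh μ0)
    -- q is in the convex hull of the indicator vectors {1_A : A ∈ B}
    (q : E → ℝ)
    (hq : ∃ c : Finset E → ℝ,
      (∀ A, 0 ≤ c A) ∧ (∀ A, c A ≠ 0 → A ∈ B) ∧ (∑ A : Finset E, c A) = 1 ∧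
      (∀ e, q e = ∑ A ∈ univ.filter (fun A => e ∈ A), c A)) :
    -- there is a Rayleigh probability measure on B with marginals q
    ∃ μ : Finset E → ℝ,
      (∀ A, 0 ≤ μ A) ∧
      (∀ A, μ A ≠ 0 → A ∈ B) ∧
      (∑ A : Finset E, μ A) = 1 ∧
      IsRayleigh μ ∧
      (∀ e, ∑ A ∈ univ.filter (fun A => e ∈ A), μ A = q e) :=
  stmt_12_general B μ0 h0 hsupp hray q hq
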